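/- arXiv:2108.06840 — 3 statements merged into one kernel-verified Lean document; each statement's English description precedes it below -/
import Mathlib

section
/- Let d ≥ 1 be an integer, p ∈ (1,∞), 0 < μ ≤ d/p. Define Φ : ℝ^d → ℝ^d by Φ(x) = x·(2/max(|x|,1) − 1). Then Φ maps the closed ball B̄_{3/2} into B̄_1, Φ(x) = x for |x| ≤ 1, Φ restricted to B̄_{3/2} \\ B_1 is Lipschitz continuous with Lipschitz continuous inverse, and there is a constant N = N(d,p,μ) such that for every measurable function v on B_1 with ‖v‖_{E_{p,μ}(B_1)} < ∞, the function w(x) := v(Φ(x)) satisfies ‖w‖_{E_{p,μ}(B_{3/2})} ≤ N ‖v‖_{E_{p,μ}(B_1)}. -/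
open MeasureTheory Metric Set Filter
open scoped ENNReal RealInnerProductSpace

noncomputable section

/-- Euclidean space `ℝ^d`. -/
abbrev E (d : ℕ) : Type := EuclideanSpace ℝ (Fin d)

/-- Frobenius norm of a `d × d` matrix. -/
def frob {d : ℕ} (m : Matrix (Fin d) (Fin d) ℝ) : ℝ :=
  Real.sqrt (∑ i, ∑ j, (m i j) ^ 2)

/-- `F` is `δ`-elliptic: `δ tr w ≤ F (m + w) - F m ≤ δ⁻¹ tr w` for symmetric `m` and
symmetric positive semidefinite `w`. -/
def Elliptic {d : ℕ} (δ : ℝ) (F : Matrix (Fin d) (Fin d) ℝ → ℝ) : Prop :=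
  ∀ m : Matrix (Fin d) (Fin d) ℝ, m.IsSymm →
    ∀ w : Matrix (Fin d) (Fin d) ℝ, w.PosSemidef →
      δ * w.trace ≤ F (m + w) - F m ∧ F (m + w) - F m ≤ δ⁻¹ * w.trace

/-- Gradient of `u : ℝ^d → ℝ` as a vector in `ℝ^d`. -/
def grad {d : ℕ} (u : E d → ℝ) (x : E d) : E d :=
  (EuclideanSpace.equiv (Fin d) ℝ).symm fun i => fderiv ℝ u x (EuclideanSpace.single i 1)

/-- Hessian matrix of `u : ℝ^d → ℝ`. -/
def hess {d : ℕ} (u : E d → ℝ) (x : E d) : Matrix (Fin d) (Fin d) ℝ :=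
  Matrix.of fun i j =>
    fderiv ℝ (fun y => fderiv ℝ u y (EuclideanSpace.single j 1)) x (EuclideanSpace.single i 1)

/-- Normalized `L_p` norm `(⨍_B |g|^p)^{1/p}` (average over `B`). -/
def nLp {d : ℕ} (p : ℝ) (B : Set (E d)) (g : E d → ℝ) : ℝ≥0∞ :=
  ((volume B)⁻¹ * ∫⁻ y in B, ENNReal.ofReal (|g y| ^ p)) ^ (1 / p)

/-- Unnormalized `L_p` norm `(∫_A |g|^p)^{1/p}`. -/
def Lpn {d : ℕ} (p : ℝ) (A : Set (E d)) (g : E d → ℝ) : ℝ≥0∞ :=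
  (∫⁻ y in A, ENNReal.ofReal (|g y| ^ p)) ^ (1 / p)

/-- Morrey norm `‖g‖_{E_{p,μ}(Ω)} = sup_{ρ>0, x∈Ω} ρ^μ (⨍_{B_ρ(x)} |g 1_Ω|^p)^{1/p}`. -/
def morrey {d : ℕ} (p μ : ℝ) (Ω : Set (E d)) (g : E d → ℝ) : ℝ≥0∞ :=
  ⨆ (ρ : ℝ) (_ : 0 < ρ) (x : E d) (_ : x ∈ Ω),
    ENNReal.ofReal (ρ ^ μ) * nLp p (ball x ρ) (Ω.indicator g)

/-- The `(θ, R₀)`-oscillation condition on `F(m, x)`. -/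
def OscCond {d : ℕ} (δ θ R₀ : ℝ) (F : Matrix (Fin d) (Fin d) ℝ → E d → ℝ) : Prop :=
  ∀ r ∈ Set.Ioc (0 : ℝ) R₀, ∀ z : E d,
    ∃ Fb : Matrix (Fin d) (Fin d) ℝ → ℝ,
      ConvexOn ℝ Set.univ Fb ∧ Elliptic δ Fb ∧ Fb 0 = 0 ∧
      ∀ m : Matrix (Fin d) (Fin d) ℝ, m.IsSymm → frob m = 1 →
        (volume (ball z r))⁻¹ *
            ∫⁻ x in ball z r,
              ⨆ (τ : ℝ) (_ : 0 < τ), ENNReal.ofReal (τ⁻¹ * |F (τ • m) x - Fb (τ • m)|)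
          ≤ ENNReal.ofReal θ

/-- The homogeneity bound `|F(ζ m, x)| ≤ ζ |F(m, x)| + K(x)` for `ζ ∈ [0,1]`. -/
def HomBound {d : ℕ} (F : Matrix (Fin d) (Fin d) ℝ → E d → ℝ) (K : E d → ℝ) : Prop :=
  ∀ ζ ∈ Set.Icc (0 : ℝ) 1, ∀ m : Matrix (Fin d) (Fin d) ℝ, m.IsSymm → ∀ x : E d,
    |F (ζ • m) x| ≤ ζ * |F m x| + K x

/-- The folding map `Φ(x) = x (2/(|x| ∨ 1) − 1)` used in the proof of Lemma 4.7. -/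
def foldMap (d : ℕ) : E d → E d := fun x => (2 / max ‖x‖ 1 - 1) • x

/-!
On `B̄_1` the folding map `Φ` is the identity; on the annulus `1 ≤ |x| < 2` it is the reflection
`R x = (2/|x| - 1) x` across the unit sphere, an involution of `0 < |x| < 2` sending `|x|` to
`2 - |x|`. Both `Φ` and `R` on `|y| ≥ 1/2` have the form `x ↦ (2/a(x) - 1) x` with `a`
1-Lipschitz and bounded below, hence are Lipschitz (with constants 5 and 9).

For the Morrey bound, split `∫_{B_ρ(x)} |w|^p` along the null unit sphere. The inner part is an
integral of `|v|^p` over `B_ρ(x)`; the outer part is pulled back into `B_1` through the 9-Lipschitz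
inverse (which enlarges volumes at most by `9^d`, via Hausdorff measure) and lands in
`B_{5ρ}(Φ x)`. A ball meeting `B_1` lies in the ball of twice the radius centred in `B_1`, where
the Morrey norm of `v` controls the integral, so both parts are `≲ |B_ρ| (‖v‖ / ρ^μ)^p`.
-/

open Module
open scoped NNReal

theorem norm_two_div_sub_one_smul_sub_le {F : Type*} [NormedAddCommGroup F] [NormedSpace ℝ F]
    {x y : F} {a b r : ℝ} (hr : 0 < r) (ha : r ≤ a) (hb : 0 < b) (hyb : ‖y‖ ≤ b) :
    ‖(2 / a - 1) • x - (2 / b - 1) • y‖ ≤ 2 * (‖x - y‖ + |a - b|) / r + ‖x - y‖ := by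
  have ha0 : 0 < a := hr.trans_le ha
  have hsplit : (2 / a - 1) • x - (2 / b - 1) • y
      = (2 / a) • ((x - y) + ((b - a) / b) • y) - (x - y) := by
    match_scalars <;> field_simp
    ring
  have hcoef : ‖((b - a) / b) • y‖ ≤ |a - b| := by
    rw [norm_smul, Real.norm_eq_abs, abs_div, abs_of_pos hb, abs_sub_comm, div_mul_eq_mul_div,
      div_le_iff₀ hb]
    gcongr
  calc ‖(2 / a - 1) • x - (2 / b - 1) • y‖
      ≤ 2 / a * (‖x - y‖ + ‖((b - a) / b) • y‖) + ‖x - y‖ := by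
        rw [hsplit]
        refine (norm_sub_le _ _).trans ?_
        rw [norm_smul, Real.norm_of_nonneg (by positivity)]
        gcongr
        exact norm_add_le _ _
    _ ≤ 2 / r * (‖x - y‖ + |a - b|) + ‖x - y‖ := by gcongr
    _ = 2 * (‖x - y‖ + |a - b|) / r + ‖x - y‖ := by ring

section Fold

variable {d : ℕ}

theorem foldMap_of_norm_le_one {x : E d} (h : ‖x‖ ≤ 1) : foldMap d x = x := by
  norm_num [foldMap, max_eq_right h]

theorem foldMap_of_one_le_norm {x : E d} (h : 1 ≤ ‖x‖) : foldMap d x = (2 / ‖x‖ - 1) • x := by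
  rw [foldMap, max_eq_left h]

theorem norm_foldMap_of_one_le_norm {x : E d} (h1 : 1 ≤ ‖x‖) (h2 : ‖x‖ ≤ 2) :
    ‖foldMap d x‖ = 2 - ‖x‖ := by
  have h0 : 0 < ‖x‖ := one_pos.trans_le h1
  have hcoef : 0 ≤ 2 / ‖x‖ - 1 := by
    rw [sub_nonneg, le_div_iff₀ h0]
    linarith
  rw [foldMap_of_one_le_norm h1, norm_smul, Real.norm_of_nonneg hcoef, sub_mul,
    div_mul_cancel₀ _ h0.ne', one_mul]

theorem norm_foldMap_le_one {x : E d} (h : ‖x‖ ≤ 2) : ‖foldMap d x‖ ≤ 1 := by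
  rcases le_total ‖x‖ 1 with h1 | h1
  · rwa [foldMap_of_norm_le_one h1]
  · rw [norm_foldMap_of_one_le_norm h1 h]
    linarith

theorem lipschitzWith_foldMap : LipschitzWith 5 (foldMap d) := by
  refine lipschitzWith_iff_norm_sub_le.2 fun x y => ?_
  have hmax : |max ‖x‖ 1 - max ‖y‖ 1| ≤ ‖x - y‖ :=
    (abs_max_sub_max_le_abs _ _ _).trans (abs_norm_sub_norm_le x y)
  calc ‖foldMap d x - foldMap d y‖
      ≤ 2 * (‖x - y‖ + |max ‖x‖ 1 - max ‖y‖ 1|) / 1 + ‖x - y‖ :=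
        norm_two_div_sub_one_smul_sub_le one_pos (le_max_right _ _) (lt_max_of_lt_right one_pos)
          (le_max_left _ _)
    _ ≤ 5 * ‖x - y‖ := by linarith
    _ = _ := by norm_num

def unfoldMap (d : ℕ) : E d → E d := fun y => (2 / ‖y‖ - 1) • y

theorem lipschitzOnWith_unfoldMap : LipschitzOnWith 9 (unfoldMap d) {y | 1 / 2 ≤ ‖y‖} := by
  refine lipschitzOnWith_iff_norm_sub_le.2 fun x hx y hy => ?_
  calc ‖unfoldMap d x - unfoldMap d y‖
      ≤ 2 * (‖x - y‖ + |‖x‖ - ‖y‖|) / (1 / 2) + ‖x - y‖ :=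
        norm_two_div_sub_one_smul_sub_le (by norm_num) hx (by linarith [hy.out]) le_rfl
    _ ≤ 9 * ‖x - y‖ := by linarith [abs_norm_sub_norm_le x y]
    _ = _ := by norm_num

theorem unfoldMap_foldMap {x : E d} (h1 : 1 ≤ ‖x‖) (h2 : ‖x‖ < 2) :
    unfoldMap d (foldMap d x) = x := by
  have h0 : 0 < ‖x‖ := one_pos.trans_le h1
  have h3 : 0 < 2 - ‖x‖ := by linarith
  rw [unfoldMap, norm_foldMap_of_one_le_norm h1 h2.le, foldMap_of_one_le_norm h1, smul_smul]
  convert one_smul ℝ x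
  field_simp
  ring

theorem lipschitzOnWith_unfoldMap_image {s : Set (E d)}
    (hs : ∀ x ∈ s, 1 ≤ ‖x‖ ∧ ‖x‖ ≤ 3 / 2) : LipschitzOnWith 9 (unfoldMap d) (foldMap d '' s) := by
  refine lipschitzOnWith_unfoldMap.mono ?_
  rintro _ ⟨x, hx, rfl⟩
  show 1 / 2 ≤ ‖foldMap d x‖
  rw [norm_foldMap_of_one_le_norm (hs x hx).1 (by linarith [(hs x hx).2])]
  linarith [(hs x hx).2]

theorem leftInvOn_unfoldMap_foldMap {s : Set (E d)} (hs : ∀ x ∈ s, 1 ≤ ‖x‖ ∧ ‖x‖ ≤ 3 / 2) :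
    LeftInvOn (unfoldMap d) (foldMap d) s := fun x hx =>
  unfoldMap_foldMap (hs x hx).1 (by linarith [(hs x hx).2])

end Fold

section ChangeOfVariables

variable {V : Type*} [NormedAddCommGroup V] [InnerProductSpace ℝ V] [FiniteDimensional ℝ V]
  [MeasurableSpace V] [BorelSpace V]

theorem LipschitzOnWith.volume_image_le {K : ℝ≥0} {f : V → V} {s : Set V}
    (hf : LipschitzOnWith K f s) : volume (f '' s) ≤ (K : ℝ≥0∞) ^ finrank ℝ V * volume s := by
  rw [← InnerProductSpace.euclideanHausdorffMeasure_eq_volume,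
    Measure.euclideanHausdorffMeasure_def]
  simp only [Measure.smul_apply, ENNReal.smul_def, smul_eq_mul]
  rw [mul_left_comm]
  gcongr
  simpa only [ENNReal.rpow_natCast] using hf.hausdorffMeasure_image_le (Nat.cast_nonneg _)

theorem setLIntegral_comp_le_of_leftInvOn {f ψ : V → V} {s t : Set V} {g : V → ℝ≥0∞} {K : ℝ≥0}
    (hf : Measurable f) (hg : Measurable g) (hψ : LipschitzOnWith K ψ (f '' s))
    (hψf : LeftInvOn ψ f s) (hst : MapsTo f s t) :
    ∫⁻ y in s, g (f y) ≤ (K : ℝ≥0∞) ^ finrank ℝ V * ∫⁻ y in t, g y := by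
  have hmap : Measure.map f (volume.restrict s) ≤
      ((K : ℝ≥0∞) ^ finrank ℝ V) • volume.restrict t := by
    refine Measure.le_iff.2 fun T hT => ?_
    rw [Measure.map_apply hf hT, Measure.restrict_apply (hf hT), Measure.smul_apply,
      Measure.restrict_apply hT, smul_eq_mul]
    calc volume (f ⁻¹' T ∩ s) ≤ volume (ψ '' (T ∩ f '' s)) :=
          measure_mono fun y hy => ⟨f y, ⟨hy.1, mem_image_of_mem f hy.2⟩, hψf hy.2⟩
      _ ≤ (K : ℝ≥0∞) ^ finrank ℝ V * volume (T ∩ f '' s) :=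
          (hψ.mono inter_subset_right).volume_image_le
      _ ≤ (K : ℝ≥0∞) ^ finrank ℝ V * volume (T ∩ t) := by
          gcongr
          exact hst.image_subset
  calc ∫⁻ y in s, g (f y) = ∫⁻ y, g y ∂(Measure.map f (volume.restrict s)) :=
        (lintegral_map hg hf).symm
    _ ≤ ∫⁻ y, g y ∂(((K : ℝ≥0∞) ^ finrank ℝ V) • volume.restrict t) := lintegral_mono' hmap le_rfl
    _ = _ := lintegral_smul_measure _ _

end ChangeOfVariables

section Morrey

variable {d : ℕ} {p μ : ℝ} {Ω : Set (E d)} {g : E d → ℝ}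

theorem lintegral_ball_le_morrey_of_mem (hp : 0 < p) {x : E d} (hx : x ∈ Ω) {σ : ℝ}
    (hσ : 0 < σ) :
    ∫⁻ y in ball x σ, ENNReal.ofReal (|Ω.indicator g y| ^ p) ≤
      volume (ball x σ) * (morrey p μ Ω g / ENNReal.ofReal (σ ^ μ)) ^ p := by
  set a := ENNReal.ofReal (σ ^ μ)
  set V := volume (ball x σ)
  set I := ∫⁻ y in ball x σ, ENNReal.ofReal (|Ω.indicator g y| ^ p)
  have ha0 : a ≠ 0 := (ENNReal.ofReal_pos.2 (Real.rpow_pos_of_pos hσ μ)).ne'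
  have hterm : a * (V⁻¹ * I) ^ (1 / p) ≤ morrey p μ Ω g :=
    le_iSup₂_of_le σ hσ (le_iSup₂_of_le x hx le_rfl)
  have hmean : V⁻¹ * I ≤ (morrey p μ Ω g / a) ^ p := by
    rw [← ENNReal.rpow_le_rpow_iff (one_div_pos.2 hp), ← ENNReal.rpow_mul,
      mul_one_div_cancel hp.ne', ENNReal.rpow_one,
      ENNReal.le_div_iff_mul_le (Or.inl ha0) (Or.inl ENNReal.ofReal_ne_top), mul_comm]
    exact hterm
  calc I = V * (V⁻¹ * I) := by
        rw [← mul_assoc, ENNReal.mul_inv_cancel (measure_ball_pos volume x hσ).ne'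
          measure_ball_lt_top.ne, one_mul]
    _ ≤ V * (morrey p μ Ω g / a) ^ p := by gcongr

theorem volume_ball_mul_div_rpow_le (hp : 0 ≤ p) (hμ : 0 ≤ μ) (M : ℝ≥0∞) (x z : E d) {ρ c : ℝ}
    (hρ : 0 < ρ) (hc : 1 ≤ c) :
    volume (ball z (c * ρ)) * (M / ENNReal.ofReal ((c * ρ) ^ μ)) ^ p ≤
      ENNReal.ofReal c ^ d * (volume (ball x ρ) * (M / ENNReal.ofReal (ρ ^ μ)) ^ p) := by
  rw [Measure.addHaar_ball_of_pos _ _ (by positivity), Measure.addHaar_ball_of_pos _ _ hρ,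
    finrank_euclideanSpace_fin, mul_pow, ENNReal.ofReal_mul (by positivity),
    ENNReal.ofReal_pow (by positivity)]
  simp only [mul_assoc]
  gcongr
  nlinarith

theorem lintegral_ball_le_morrey (hp : 0 < p) (hμ : 0 ≤ μ) (x : E d) {σ : ℝ} (hσ : 0 < σ) :
    ∫⁻ y in ball x σ, ENNReal.ofReal (|Ω.indicator g y| ^ p) ≤
      2 ^ d * (volume (ball x σ) * (morrey p μ Ω g / ENNReal.ofReal (σ ^ μ)) ^ p) := by
  rcases (Ω ∩ ball x σ).eq_empty_or_nonempty with hΩ | ⟨z, hzΩ, hz⟩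
  · have hzero : ∀ y ∈ ball x σ, ENNReal.ofReal (|Ω.indicator g y| ^ p) = 0 := fun y hy => by
      rw [indicator_of_notMem fun h => hΩ.subset ⟨h, hy⟩, abs_zero, Real.zero_rpow hp.ne',
        ENNReal.ofReal_zero]
    rw [setLIntegral_congr_fun measurableSet_ball hzero, lintegral_zero]
    exact bot_le
  · have hsub : ball x σ ⊆ ball z (2 * σ) :=
      ball_subset_ball' (by linarith [mem_ball'.1 hz])
    calc _ ≤ ∫⁻ y in ball z (2 * σ), ENNReal.ofReal (|Ω.indicator g y| ^ p) :=
          lintegral_mono_set hsub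
      _ ≤ volume (ball z (2 * σ)) * (morrey p μ Ω g / ENNReal.ofReal ((2 * σ) ^ μ)) ^ p :=
          lintegral_ball_le_morrey_of_mem hp hzΩ (by positivity)
      _ ≤ _ := by
          simpa using volume_ball_mul_div_rpow_le hp.le hμ _ x z hσ one_le_two

theorem morrey_le_of_lintegral_ball_le (hp : 0 < p) {C M : ℝ≥0∞}
    (h : ∀ ρ > 0, ∀ x ∈ Ω, ∫⁻ y in ball x ρ, ENNReal.ofReal (|Ω.indicator g y| ^ p) ≤
      C * (volume (ball x ρ) * (M / ENNReal.ofReal (ρ ^ μ)) ^ p)) :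
    morrey p μ Ω g ≤ C ^ (1 / p) * M := by
  refine iSup₂_le fun ρ hρ => iSup₂_le fun x hx => ?_
  set a := ENNReal.ofReal (ρ ^ μ)
  set V := volume (ball x ρ)
  have ha0 : a ≠ 0 := (ENNReal.ofReal_pos.2 (Real.rpow_pos_of_pos hρ μ)).ne'
  have hmean : V⁻¹ * ∫⁻ y in ball x ρ, ENNReal.ofReal (|Ω.indicator g y| ^ p) ≤
      C * (M / a) ^ p :=
    calc _ ≤ V⁻¹ * (C * (V * (M / a) ^ p)) := by gcongr; exact h ρ hρ x hx
      _ = C * (M / a) ^ p := by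
          rw [mul_left_comm, ← mul_assoc V⁻¹, ENNReal.inv_mul_cancel
            (measure_ball_pos volume x hρ).ne' measure_ball_lt_top.ne, one_mul]
  calc a * nLp p (ball x ρ) (Ω.indicator g) ≤ a * (C * (M / a) ^ p) ^ (1 / p) := by
        unfold nLp; gcongr
    _ = C ^ (1 / p) * (a * (M / a)) := by
        rw [ENNReal.mul_rpow_of_nonneg _ _ (by positivity), ← ENNReal.rpow_mul,
          mul_one_div_cancel hp.ne', ENNReal.rpow_one]
        ring
    _ = C ^ (1 / p) * M := by rw [ENNReal.mul_div_cancel ha0 ENNReal.ofReal_ne_top]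

end Morrey

section FoldMorrey

variable {d : ℕ} {p μ : ℝ}

theorem lintegral_indicator_comp_foldMap_le (hp : 0 < p) {v : E d → ℝ} (hv : Measurable v)
    (s : Set (E d)) :
    ∫⁻ y in s, ENNReal.ofReal (|(ball 0 (3 / 2)).indicator (fun x => v (foldMap d x)) y| ^ p) ≤
      (∫⁻ y in s, ENNReal.ofReal (|(ball 0 1).indicator v y| ^ p)) +
        ∫⁻ y in s ∩ (ball 0 (3 / 2) \ closedBall 0 1),
          ENNReal.ofReal (|(ball 0 1).indicator v (foldMap d y)| ^ p) := by
  set G : E d → ℝ≥0∞ := fun z => ENNReal.ofReal (|(ball 0 1).indicator v z| ^ p)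
  set A : Set (E d) := ball 0 (3 / 2) \ closedBall 0 1
  have hA : MeasurableSet A := measurableSet_ball.diff measurableSet_closedBall
  have hG : Measurable G := by fun_prop (disch := exact measurableSet_ball)
  -- off the null sphere `‖y‖ = 1`, each point lies either in the unit ball or in the annulus `A`
  have hsphere : ∀ᵐ y ∂volume.restrict s, y ∉ sphere (0 : E d) 1 :=
    ae_restrict_of_ae (measure_eq_zero_iff_ae_notMem.1
      (Measure.addHaar_sphere_of_ne_zero volume 0 one_ne_zero))
  calc _ ≤ ∫⁻ y in s, G y + A.indicator (G ∘ foldMap d) y := by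
        refine lintegral_mono_ae (hsphere.mono fun y hy => ?_)
        rcases lt_or_gt_of_ne (mem_sphere_zero_iff_norm.not.1 hy) with hy1 | hy1
        · have hy' : y ∈ ball (0 : E d) 1 := mem_ball_zero_iff.2 hy1
          rw [indicator_of_mem (ball_subset_ball (by norm_num) hy'),
            foldMap_of_norm_le_one hy1.le, ← indicator_of_mem hy' v]
          exact le_self_add
        by_cases hy2 : y ∈ ball (0 : E d) (3 / 2)
        · have hyA : y ∈ A := ⟨hy2, fun h => (mem_closedBall_zero_iff.1 h).not_gt hy1⟩
          have hΦ : foldMap d y ∈ ball (0 : E d) 1 := by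
            rw [mem_ball_zero_iff, norm_foldMap_of_one_le_norm hy1.le
              (by linarith [mem_ball_zero_iff.1 hy2])]
            linarith
          rw [indicator_of_mem hy2, indicator_of_mem hyA, ← indicator_of_mem hΦ v]
          exact le_add_self
        · rw [indicator_of_notMem hy2, abs_zero, Real.zero_rpow hp.ne', ENNReal.ofReal_zero]
          exact bot_le
    _ = _ := by
        rw [lintegral_add_left hG, lintegral_indicator hA, Measure.restrict_restrict hA,
          inter_comm A s]
        rfl

theorem morrey_comp_foldMap_le (hp : 0 < p) (hμ : 0 ≤ μ) {v : E d → ℝ} (hv : Measurable v) :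
    morrey p μ (ball 0 (3 / 2)) (fun x => v (foldMap d x)) ≤
      ((2 ^ d + 90 ^ d : ℝ≥0) : ℝ≥0∞) ^ (1 / p) * morrey p μ (ball 0 1) v := by
  refine morrey_le_of_lintegral_ball_le hp fun ρ hρ x _ => ?_
  set M := morrey p μ (ball (0 : E d) 1) v
  set B := volume (ball x ρ) * (M / ENNReal.ofReal (ρ ^ μ)) ^ p
  set G : E d → ℝ≥0∞ := fun z => ENNReal.ofReal (|(ball 0 1).indicator v z| ^ p)
  have hG : Measurable G := by fun_prop (disch := exact measurableSet_ball)
  set s := ball x ρ ∩ (ball 0 (3 / 2) \ closedBall 0 1)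
  have hs : ∀ y ∈ s, 1 ≤ ‖y‖ ∧ ‖y‖ ≤ 3 / 2 := fun y hy =>
    ⟨(not_le.1 fun h => hy.2.2 (mem_closedBall_zero_iff.2 h)).le, (mem_ball_zero_iff.1 hy.2.1).le⟩
  have hmaps : MapsTo (foldMap d) s (ball (foldMap d x) (5 * ρ)) := fun y hy => by
    have := lipschitzWith_foldMap.dist_le_mul y x
    rw [mem_ball]
    push_cast at this
    nlinarith [mem_ball.1 hy.1]
  -- `9 ^ d`: volume distortion of the 9-Lipschitz inverse; `2 ^ d * 5 ^ d`: re-centring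
  -- `B_{5ρ}(Φ x)` in the unit ball and comparing it with `B_ρ(x)`
  have houter : ∫⁻ y in s, G (foldMap d y) ≤ 9 ^ d * (2 ^ d * (5 ^ d * B)) :=
    calc _ ≤ 9 ^ d * ∫⁻ y in ball (foldMap d x) (5 * ρ), G y := by
          simpa using setLIntegral_comp_le_of_leftInvOn lipschitzWith_foldMap.continuous.measurable
            hG (lipschitzOnWith_unfoldMap_image hs) (leftInvOn_unfoldMap_foldMap hs) hmaps
      _ ≤ 9 ^ d * (2 ^ d * (volume (ball (foldMap d x) (5 * ρ)) *
            (M / ENNReal.ofReal ((5 * ρ) ^ μ)) ^ p)) := by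
          gcongr
          exact lintegral_ball_le_morrey hp hμ _ (by positivity)
      _ ≤ 9 ^ d * (2 ^ d * (5 ^ d * B)) := by
          gcongr 9 ^ d * (2 ^ d * ?_)
          simpa using
            volume_ball_mul_div_rpow_le (c := 5) hp.le hμ M x (foldMap d x) hρ (by norm_num)
  calc _ ≤ _ := lintegral_indicator_comp_foldMap_le hp hv (ball x ρ)
    _ ≤ 2 ^ d * B + 9 ^ d * (2 ^ d * (5 ^ d * B)) :=
        add_le_add (lintegral_ball_le_morrey (Ω := ball 0 1) (g := v) hp hμ x hρ) houter
    _ = _ := by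
        push_cast
        rw [show (90 : ℝ≥0∞) = 9 * 2 * 5 by norm_num, mul_pow, mul_pow]
        ring

end FoldMorrey

theorem stmt_13_general (d : ℕ) (p μ : ℝ)
    (hp : 1 < p) (hμ : 0 < μ) :
    (∀ x ∈ closedBall (0 : E d) (3 / 2), foldMap d x ∈ closedBall (0 : E d) 1) ∧
      (∀ x : E d, ‖x‖ ≤ 1 → foldMap d x = x) ∧
      (∃ (L₁ L₂ : NNReal) (Ψ : E d → E d),
        LipschitzOnWith L₁ (foldMap d) (closedBall (0 : E d) (3 / 2) \ ball 0 1) ∧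
        LipschitzOnWith L₂ Ψ (foldMap d '' (closedBall (0 : E d) (3 / 2) \ ball 0 1)) ∧
        ∀ x ∈ closedBall (0 : E d) (3 / 2) \ ball 0 1, Ψ (foldMap d x) = x) ∧
      ∃ N : ℝ, 0 < N ∧
        ∀ v : E d → ℝ, Measurable v →
          morrey p μ (ball (0 : E d) 1) v < ⊤ →
          morrey p μ (ball (0 : E d) (3 / 2)) (fun x => v (foldMap d x)) ≤
            ENNReal.ofReal N * morrey p μ (ball (0 : E d) 1) v := by
  have hannulus : ∀ x ∈ closedBall (0 : E d) (3 / 2) \ ball 0 1, 1 ≤ ‖x‖ ∧ ‖x‖ ≤ 3 / 2 :=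
    fun x hx => ⟨not_lt.1 fun h => hx.2 (mem_ball_zero_iff.2 h), mem_closedBall_zero_iff.1 hx.1⟩
  refine ⟨fun x hx => mem_closedBall_zero_iff.2 (norm_foldMap_le_one ?_),
    fun x => foldMap_of_norm_le_one,
    ⟨5, 9, unfoldMap d, lipschitzWith_foldMap.lipschitzOnWith,
      lipschitzOnWith_unfoldMap_image hannulus, leftInvOn_unfoldMap_foldMap hannulus⟩,
    ((2 ^ d + 90 ^ d : ℝ≥0) : ℝ) ^ (1 / p), by positivity, fun v hv _ => ?_⟩
  · linarith [mem_closedBall_zero_iff.1 hx]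
  · rw [← ENNReal.ofReal_rpow_of_nonneg NNReal.zero_le_coe (by positivity),
      ENNReal.ofReal_coe_nnreal]
    exact morrey_comp_foldMap_le (by linarith) hμ.le hv

/-- The reflection-extension estimate (4.17) inside the paper's Lemma 4.7. -/
theorem stmt_13 (d : ℕ) (hd : 1 ≤ d) (p μ : ℝ)
    (hp : 1 < p) (hμ : 0 < μ) (hμd : μ ≤ (d : ℝ) / p) :
    (∀ x ∈ closedBall (0 : E d) (3 / 2), foldMap d x ∈ closedBall (0 : E d) 1) ∧
      (∀ x : E d, ‖x‖ ≤ 1 → foldMap d x = x) ∧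
      (∃ (L₁ L₂ : NNReal) (Ψ : E d → E d),
        LipschitzOnWith L₁ (foldMap d) (closedBall (0 : E d) (3 / 2) \ ball 0 1) ∧
        LipschitzOnWith L₂ Ψ (foldMap d '' (closedBall (0 : E d) (3 / 2) \ ball 0 1)) ∧
        ∀ x ∈ closedBall (0 : E d) (3 / 2) \ ball 0 1, Ψ (foldMap d x) = x) ∧
      ∃ N : ℝ, 0 < N ∧
        ∀ v : E d → ℝ, Measurable v →
          morrey p μ (ball (0 : E d) 1) v < ⊤ →
          morrey p μ (ball (0 : E d) (3 / 2)) (fun x => v (foldMap d x)) ≤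
            ENNReal.ofReal N * morrey p μ (ball (0 : E d) 1) v :=
  stmt_13_general d p μ hp hμ
end
end

section
/- Let d ≥ 1 be an integer and c ∈ ℝ. Define u : ℝ^d → ℝ by u(x) = 1 − |x|² and b : ℝ^d \\ {0} → ℝ^d by b(x) = −c x/|x|². Then for every x ∈ ℝ^d \\ {0}: Δu(x) + b(x)·Du(x) = 2c − 2d. In particular, for c = d the function u satisfies Δu + b·Du = 0 on B_1 \\ {0}, u = 0 on ∂B_1 = {x : |x| = 1}, and u(0) = 1; thus u is a nontrivial solution with zero free term and zero boundary data, so no maximum-principle a priori estimate through the free term and boundary data can hold for this drift. -/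
open MeasureTheory Metric Set Filter
open scoped ENNReal RealInnerProductSpace

noncomputable section

lemma fderiv_u {d : ℕ} (x : E d) :
    fderiv ℝ (fun y : E d => 1 - ‖y‖ ^ 2) x = -(2 • (innerSL ℝ x)) :=
  (by simpa using (hasStrictFDerivAt_norm_sq x).hasFDerivAt.const_sub 1 :
    HasFDerivAt _ _ x).fderiv

lemma grad_u {d : ℕ} (x : E d) :
    grad (fun y : E d => 1 - ‖y‖ ^ 2) x = (-2 : ℝ) • x := by
  unfold grad
  ext i
  simp [fderiv_u, real_inner_comm x, EuclideanSpace.inner_single_right]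

lemma hess_u {d : ℕ} (x : E d) (i j : Fin d) :
    hess (fun y : E d => 1 - ‖y‖ ^ 2) x i j = if i = j then -2 else 0 := by
  unfold hess
  have h1 : (fun y : E d => fderiv ℝ (fun y : E d => 1 - ‖y‖ ^ 2) y (EuclideanSpace.single j 1))
      = fun y => ((-2 : ℝ) • (innerSL ℝ (EuclideanSpace.single j 1 : E d))) y := by
    funext y
    simp [fderiv_u, real_inner_comm]
  rw [Matrix.of_apply, h1, ContinuousLinearMap.fderiv]
  simp [EuclideanSpace.inner_single_left, EuclideanSpace.single_apply, eq_comm]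
  split <;> norm_num

lemma trace_hess {d : ℕ} (x : E d) :
    (hess (fun y : E d => 1 - ‖y‖ ^ 2) x).trace = -2 * d := by
  unfold Matrix.trace Matrix.diag
  simp [hess_u]; ring

lemma main_eq {d : ℕ} (c : ℝ) (x : E d) (hx : x ≠ 0) :
    (hess (fun y : E d => 1 - ‖y‖ ^ 2) x).trace +
        ⟪(-(c / ‖x‖ ^ 2)) • x, grad (fun y : E d => 1 - ‖y‖ ^ 2) x⟫ = 2 * c - 2 * d := by
  rw [trace_hess, grad_u, real_inner_smul_left, real_inner_smul_right,
    real_inner_self_eq_norm_sq]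
  have : ‖x‖ ^ 2 ≠ 0 := pow_ne_zero _ (norm_ne_zero_iff.mpr hx)
  field_simp
  ring

/-- Example 1.1 of the paper: for `u(x) = 1 − |x|²` and `b(x) = −c x/|x|²` one has
`Δu + b·Du = 2c − 2d`; for `c = d` this gives a nontrivial solution with zero free term
and zero boundary data. -/
theorem stmt_16 (d : ℕ) (hd : 1 ≤ d) (c : ℝ) :
    (∀ x : E d, x ≠ 0 →
        (hess (fun y : E d => 1 - ‖y‖ ^ 2) x).trace +
            ⟪(-(c / ‖x‖ ^ 2)) • x, grad (fun y : E d => 1 - ‖y‖ ^ 2) x⟫ =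
          2 * c - 2 * d) ∧
      (∀ x ∈ sphere (0 : E d) 1, (1 : ℝ) - ‖x‖ ^ 2 = 0) ∧
      ((1 : ℝ) - ‖(0 : E d)‖ ^ 2 = 1) ∧
      (c = d → ∀ x ∈ ball (0 : E d) 1, x ≠ 0 →
        (hess (fun y : E d => 1 - ‖y‖ ^ 2) x).trace +
            ⟪(-(c / ‖x‖ ^ 2)) • x, grad (fun y : E d => 1 - ‖y‖ ^ 2) x⟫ = 0) := by
  refine ⟨fun x hx => main_eq c x hx, ?_, by simp, fun hc x _ hx => ?_⟩
  · intro x hx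
    rw [mem_sphere_iff_norm, sub_zero] at hx
    rw [hx]; ring
  · rw [main_eq c x hx, hc]; ring
end
end

section
/- Define u : ℝ → ℝ by u(x) = 1 − |x|³. Then u is twice continuously differentiable on ℝ with u'(x) = −3x|x| and u''(x) = −6|x|, and for every x ∈ ℝ one has u''(x) + √(12·|u'(x)|) = 0. Moreover u(−1) = u(1) = 0 and u(0) = 1. Since the identically zero function also satisfies v'' + √(12·|v'|) = 0 on (−1,1) with v(±1) = 0, the Dirichlet problem u'' + √(12·|u'|) = 0 on (−1,1) with zero boundary values has at least two distinct twice continuously differentiable solutions. -/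
open Set

noncomputable section

private lemma hd_cube (x : ℝ) : HasDerivAt (fun y : ℝ => |y| ^ 3) (3 * x * |x|) x := by
  rcases lt_trichotomy x 0 with hx | rfl | hx
  · have h : HasDerivAt (fun y : ℝ => -(y ^ 3)) (3 * x * |x|) x := by
      have := (hasDerivAt_pow 3 x).neg
      refine this.congr_deriv ?_
      rw [abs_of_neg hx]; push_cast; ring
    refine h.congr_of_eventuallyEq ?_
    filter_upwards [eventually_lt_nhds hx] with y hy
    rw [abs_of_neg hy]; ring
  · rw [show (3 : ℝ) * 0 * |(0:ℝ)| = 0 by simp]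
    rw [hasDerivAt_iff_tendsto_slope]
    have : (fun y : ℝ => y * |y|) =ᶠ[nhdsWithin 0 {(0:ℝ)}ᶜ] slope (fun y : ℝ => |y| ^ 3) 0 := by
      filter_upwards [self_mem_nhdsWithin] with y hy
      have hy' : y ≠ 0 := hy
      rw [slope_def_field]
      field_simp
      rcases abs_cases y with ⟨h, _⟩ | ⟨h, _⟩ <;> rw [h] <;> ring
    refine Filter.Tendsto.congr' this ?_
    have : Filter.Tendsto (fun y : ℝ => y * |y|) (nhds 0) (nhds 0) := by
      have := (continuous_id.mul continuous_abs).tendsto (0:ℝ)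
      convert this using 2 <;> simp
    exact this.mono_left nhdsWithin_le_nhds
  · have h : HasDerivAt (fun y : ℝ => y ^ 3) (3 * x * |x|) x := by
      have := hasDerivAt_pow 3 x
      refine this.congr_deriv ?_
      rw [abs_of_pos hx]; push_cast; ring
    refine h.congr_of_eventuallyEq ?_
    filter_upwards [eventually_gt_nhds hx] with y hy
    rw [abs_of_pos hy]

private lemma hd_mulabs (x : ℝ) : HasDerivAt (fun y : ℝ => y * |y|) (2 * |x|) x := by
  rcases lt_trichotomy x 0 with hx | rfl | hx
  · have h : HasDerivAt (fun y : ℝ => -(y ^ 2)) (2 * |x|) x := by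
      have := (hasDerivAt_pow 2 x).neg
      refine this.congr_deriv ?_
      rw [abs_of_neg hx]; push_cast; ring
    refine h.congr_of_eventuallyEq ?_
    filter_upwards [eventually_lt_nhds hx] with y hy
    rw [abs_of_neg hy]; ring
  · rw [show (2 : ℝ) * |(0:ℝ)| = 0 by simp]
    rw [hasDerivAt_iff_tendsto_slope]
    have heq : (fun y : ℝ => |y|) =ᶠ[nhdsWithin 0 {(0:ℝ)}ᶜ] slope (fun y : ℝ => y * |y|) 0 := by
      filter_upwards [self_mem_nhdsWithin] with y hy
      have hy' : y ≠ 0 := hy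
      rw [slope_def_field]
      field_simp
      simp
    refine Filter.Tendsto.congr' heq ?_
    have : Filter.Tendsto (fun y : ℝ => |y|) (nhds 0) (nhds 0) := by
      simpa using continuous_abs.tendsto (0:ℝ)
    exact this.mono_left nhdsWithin_le_nhds
  · have h : HasDerivAt (fun y : ℝ => y ^ 2) (2 * |x|) x := by
      have := hasDerivAt_pow 2 x
      refine this.congr_deriv ?_
      rw [abs_of_pos hx]; push_cast; ring
    refine h.congr_of_eventuallyEq ?_
    filter_upwards [eventually_gt_nhds hx] with y hy
    rw [abs_of_pos hy]; ring

private lemma hd_u (x : ℝ) : HasDerivAt (fun y : ℝ => 1 - |y| ^ 3) (-3 * x * |x|) x := by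
  have := (hd_cube x).const_sub 1
  refine this.congr_deriv ?_
  ring

private lemma deriv_u : deriv (fun y : ℝ => 1 - |y| ^ 3) = fun x => -3 * x * |x| :=
  funext fun x => (hd_u x).deriv

private lemma hd_u' (x : ℝ) :
    HasDerivAt (fun y : ℝ => -3 * y * |y|) (-6 * |x|) x := by
  have h : HasDerivAt (fun y : ℝ => (-3 : ℝ) * (y * |y|)) ((-3) * (2 * |x|)) x :=
    (hd_mulabs x).const_mul (-3)
  have h2 : HasDerivAt (fun y : ℝ => -3 * y * |y|) ((-3) * (2 * |x|)) x := by
    convert h using 1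
    funext y; ring
  convert h2 using 1; ring

private lemma deriv2_u : deriv (deriv (fun y : ℝ => 1 - |y| ^ 3)) = fun x => -6 * |x| := by
  rw [deriv_u]
  exact funext fun x => (hd_u' x).deriv

private lemma contdiff_u : ContDiff ℝ 2 (fun y : ℝ => 1 - |y| ^ 3) := by
  rw [show (2 : WithTop ℕ∞) = 1 + 1 from rfl, contDiff_succ_iff_deriv]
  refine ⟨fun x => (hd_u x).differentiableAt, by simp, ?_⟩
  rw [deriv_u, show (1 : WithTop ℕ∞) = 0 + 1 from rfl, contDiff_succ_iff_deriv]
  refine ⟨fun x => (hd_u' x).differentiableAt, by simp, ?_⟩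
  rw [contDiff_zero, funext fun x => (hd_u' x).deriv]
  exact (continuous_const.mul continuous_abs)

private lemma sqrt_identity (x : ℝ) :
    -6 * |x| + Real.sqrt (12 * abs ((-3 : ℝ) * x * |x|)) = 0 := by
  have h : (12 : ℝ) * abs ((-3 : ℝ) * x * |x|) = (6 * |x|) ^ 2 := by
    rw [abs_mul, abs_mul, abs_abs]
    rw [show |(-3 : ℝ)| = 3 by norm_num]
    ring
  rw [h, Real.sqrt_sq (by positivity)]
  ring

/-- The first example in the paper's Remark 2.4: `u(x) = 1 − |x|³` and `v ≡ 0` are two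
distinct C² solutions of `u'' + √(12 |u'|) = 0` on `(−1,1)` with zero boundary values. -/
theorem stmt_19 :
    ContDiff ℝ 2 (fun x : ℝ => 1 - |x| ^ 3) ∧
      (∀ x : ℝ, deriv (fun x : ℝ => 1 - |x| ^ 3) x = -3 * x * |x|) ∧
      (∀ x : ℝ, deriv (deriv (fun x : ℝ => 1 - |x| ^ 3)) x = -6 * |x|) ∧
      (∀ x : ℝ, deriv (deriv (fun x : ℝ => 1 - |x| ^ 3)) x +
        Real.sqrt (12 * |deriv (fun x : ℝ => 1 - |x| ^ 3) x|) = 0) ∧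
      (1 - |(-1 : ℝ)| ^ 3 = 0) ∧ (1 - |(1 : ℝ)| ^ 3 = 0) ∧ (1 - |(0 : ℝ)| ^ 3 = 1) ∧
      ∃ v w : ℝ → ℝ, ContDiff ℝ 2 v ∧ ContDiff ℝ 2 w ∧
        (∀ x ∈ Ioo (-1 : ℝ) 1,
          deriv (deriv v) x + Real.sqrt (12 * |deriv v x|) = 0) ∧
        (∀ x ∈ Ioo (-1 : ℝ) 1,
          deriv (deriv w) x + Real.sqrt (12 * |deriv w x|) = 0) ∧
        v (-1) = 0 ∧ v 1 = 0 ∧ w (-1) = 0 ∧ w 1 = 0 ∧ v ≠ w := by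
  refine ⟨contdiff_u, fun x => by rw [deriv_u], fun x => by rw [deriv2_u],
    fun x => ?_, by norm_num, by norm_num, by norm_num,
    (fun x : ℝ => 1 - |x| ^ 3), (fun _ : ℝ => 0), contdiff_u, contDiff_const,
    fun x _ => ?_, fun x _ => ?_, by norm_num, by norm_num, rfl, rfl, ?_⟩
  · rw [deriv2_u, deriv_u]
    exact sqrt_identity x
  · rw [deriv2_u, deriv_u]
    exact sqrt_identity x
  · simp
  · intro h
    have := congrFun h 0
    norm_num at this
end
end
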